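/- Let r be a natural number, s : {1,…,r} → ℂ, n ∈ ℂ, k ∈ ℤ, and let z be a complex number such that z − n − 1/2 is not an integer. For j ∈ ℤ define Ψ_j(z) := Σ_{m : {1,…,r} → ℕ} ( ∏_{i=1}^{r} s_i^{m_i} / m_i! ) · Γ( z + j − n − 1/2 − Σ_{i=1}^{r} i·m_i ) (each sum converges absolutely). Then Ψ_k(z) + (n + 1/2 − z)·Ψ_{k−1}(z) + Σ_{i=1}^{r} i·s_i·Ψ_{k−1−i}(z) = (k − 1)·Ψ_{k−1}(z). -/

import Mathlib

/-!
Write `T m = ∑ i, (i + 1) m_i` and `c_m = ∏ i, s_i^{m_i} / m_i!`, and let `a = z + k - 1 - n - 1/2`,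
so that `Ψ_{k-1} = ∑ c_m Γ(a - T m)`. The functional equation `Γ(x + 1) = x Γ(x)` (valid since
`a - T m ≠ 0`) gives `Ψ_k = ∑ (a - T m) c_m Γ(a - T m)`. On the other hand
`m_i c_m = s_i c_{m - e_i}`, so shifting the summation index turns `(i + 1) s_i Ψ_{k-1-(i+1)}` into
`∑ (i + 1) m_i c_m Γ(a - T m)`; summed over `i` this is `∑ T m c_m Γ(a - T m)`. Adding up,
the `T m` terms cancel and what is left is `a Ψ_{k-1} = (k - 1 - (n + 1/2 - z)) Ψ_{k-1}`.
All series converge absolutely because `N ↦ Γ(a - N)` is bounded.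
-/

open Complex Finset

namespace Complex

theorem norm_Gamma_sub_one_le {w : ℂ} (hw : w.re ≤ 0) : ‖Gamma (w - 1)‖ ≤ ‖Gamma w‖ := by
  have hre : (w - 1).re ≤ -1 := by simp only [sub_re, one_re]; linarith
  have hne : w - 1 ≠ 0 := fun h => by rw [h, zero_re] at hre; norm_num at hre
  have hone : 1 ≤ ‖w - 1‖ :=
    (le_abs.2 (Or.inr (by linarith))).trans (abs_re_le_norm _)
  calc ‖Gamma (w - 1)‖ ≤ ‖w - 1‖ * ‖Gamma (w - 1)‖ := le_mul_of_one_le_left (norm_nonneg _) hone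
    _ = ‖Gamma w‖ := by rw [← norm_mul, ← Gamma_add_one _ hne, sub_add_cancel]

theorem exists_norm_Gamma_sub_natCast_le (a : ℂ) : ∃ C, ∀ N : ℕ, ‖Gamma (a - N)‖ ≤ C := by
  set N₀ := ⌈a.re⌉₊
  have hanti : AntitoneOn (fun N : ℕ => ‖Gamma (a - N)‖) (Set.Ici N₀) := by
    refine antitoneOn_nat_Ici_of_succ_le fun N hN => ?_
    have hre : (a - N).re ≤ 0 := by
      simpa using (Nat.le_ceil a.re).trans (Nat.cast_le.2 hN)
    simpa [sub_sub] using norm_Gamma_sub_one_le hre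
  refine ⟨∑ N ∈ range (N₀ + 1), ‖Gamma (a - N)‖, fun N => ?_⟩
  have hinit : ∀ M ≤ N₀, ‖Gamma (a - M)‖ ≤ ∑ N ∈ range (N₀ + 1), ‖Gamma (a - N)‖ :=
    fun M hM => single_le_sum (f := fun N : ℕ => ‖Gamma (a - N)‖) (fun _ _ => norm_nonneg _)
      (mem_range.2 (Nat.lt_succ_of_le hM))
  rcases le_total N N₀ with h | h
  · exact hinit N h
  · exact (hanti (Set.mem_Ici.2 le_rfl) (Set.mem_Ici.2 h) h).trans (hinit N₀ le_rfl)

end Complex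

theorem summable_prod_apply_of_nonneg {ι : Type*} [Fintype ι] {f : ι → ℕ → ℝ}
    (hf₀ : ∀ i n, 0 ≤ f i n) (hf : ∀ i, Summable (f i)) :
    Summable fun m : ι → ℕ => ∏ i, f i (m i) := by
  classical
  refine summable_of_sum_le (c := ∏ i, ∑' n, f i n)
    (fun m => prod_nonneg fun i _ => hf₀ i (m i)) fun u => ?_
  calc ∑ m ∈ u, ∏ i, f i (m i)
      ≤ ∑ m ∈ Fintype.piFinset fun i => u.image (· i), ∏ i, f i (m i) :=
        sum_le_sum_of_subset_of_nonneg
          (fun m hm => Fintype.mem_piFinset.2 fun i => mem_image_of_mem _ hm)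
          fun m _ _ => prod_nonneg fun i _ => hf₀ i (m i)
    _ = ∏ i, ∑ n ∈ u.image (· i), f i n := (prod_univ_sum _ _).symm
    _ ≤ ∏ i, ∑' n, f i n :=
        prod_le_prod (fun i _ => sum_nonneg fun n _ => hf₀ i n)
          fun i _ => (hf i).sum_le_tsum _ fun n _ => hf₀ i n

section GammaSeries

variable {ι : Type*} [Fintype ι]

/-- The coefficient of `x^m` in `exp (∑ i, s i * x i)`. -/
noncomputable def expCoeff (s : ι → ℂ) (m : ι → ℕ) : ℂ :=
  ∏ i, s i ^ m i / ((m i).factorial : ℂ)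

theorem summable_norm_expCoeff (s : ι → ℂ) : Summable fun m => ‖expCoeff s m‖ := by
  have h := summable_prod_apply_of_nonneg (fun i n => by positivity)
    fun i => Real.summable_pow_div_factorial ‖s i‖
  refine h.congr fun m => ?_
  simp [expCoeff, norm_prod, norm_pow]

theorem expCoeff_add_single [DecidableEq ι] (s : ι → ℂ) (m : ι → ℕ) (i : ι) :
    ((m i : ℂ) + 1) * expCoeff s (m + Pi.single i 1) = s i * expCoeff s m := by
  have hrest : ∏ j ∈ {i}ᶜ, s j ^ (m + Pi.single i 1 : ι → ℕ) j /
        (((m + Pi.single i 1 : ι → ℕ) j).factorial : ℂ)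
      = ∏ j ∈ {i}ᶜ, s j ^ m j / ((m j).factorial : ℂ) :=
    prod_congr rfl fun j hj => by
      rw [Pi.add_apply, Pi.single_eq_of_ne (by simpa using hj), add_zero]
  rw [expCoeff, expCoeff, Fintype.prod_eq_mul_prod_compl i, Fintype.prod_eq_mul_prod_compl i,
    hrest, Pi.add_apply, Pi.single_eq_same, pow_succ, Nat.factorial_succ]
  push_cast
  field_simp

theorem tsum_natCast_mul_expCoeff_mul [DecidableEq ι] (s : ι → ℂ) (f : (ι → ℕ) → ℂ) (i : ι) :
    ∑' m, (m i : ℂ) * (expCoeff s m * f m)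
      = s i * ∑' m, expCoeff s m * f (m + Pi.single i 1) := by
  have hsupp : Function.support (fun m : ι → ℕ => (m i : ℂ) * (expCoeff s m * f m))
      ⊆ Set.range (· + (Pi.single i 1 : ι → ℕ)) := by
    intro m hm
    have hmi : m i ≠ 0 := fun h => hm (by simp [h])
    refine ⟨m - (Pi.single i 1 : ι → ℕ), funext fun j => ?_⟩
    rcases eq_or_ne j i with rfl | hj
    · simp only [Pi.add_apply, Pi.sub_apply, Pi.single_eq_same]; omega
    · simp [Pi.single_eq_of_ne hj]
  rw [← tsum_mul_left, ← (add_left_injective (Pi.single i 1 : ι → ℕ)).tsum_eq hsupp]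
  refine tsum_congr fun m => ?_
  simp only [Pi.add_apply, Pi.single_eq_same, Nat.cast_add, Nat.cast_one, ← mul_assoc,
    expCoeff_add_single]

variable (s : ι → ℂ) (w : ι → ℕ)

noncomputable def gammaSeries (a : ℂ) : ℂ :=
  ∑' m, expCoeff s m * Gamma (a - ((∑ i, w i * m i : ℕ) : ℂ))

theorem summable_gammaSeries (a : ℂ) :
    Summable fun m => expCoeff s m * Gamma (a - ((∑ i, w i * m i : ℕ) : ℂ)) := by
  obtain ⟨C, hC⟩ := exists_norm_Gamma_sub_natCast_le a
  refine Summable.of_norm_bounded ((summable_norm_expCoeff s).mul_right C) fun m => ?_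
  rw [norm_mul]
  exact mul_le_mul_of_nonneg_left (hC _) (norm_nonneg _)

theorem expCoeff_mul_Gamma_add_one_sub {a : ℂ} (ha : ∀ N : ℕ, a ≠ N) (m : ι → ℕ) :
    expCoeff s m * Gamma (a + 1 - ((∑ i, w i * m i : ℕ) : ℂ))
      = (a - ((∑ i, w i * m i : ℕ) : ℂ)) *
          (expCoeff s m * Gamma (a - ((∑ i, w i * m i : ℕ) : ℂ))) := by
  rw [add_sub_right_comm, Gamma_add_one _ (sub_ne_zero.2 (ha _))]
  ring

theorem natCast_mul_gammaSeries_sub [DecidableEq ι] (a : ℂ) (i : ι) :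
    (w i : ℂ) * s i * gammaSeries s w (a - w i)
      = ∑' m, ((w i * m i : ℕ) : ℂ) *
          (expCoeff s m * Gamma (a - ((∑ j, w j * m j : ℕ) : ℂ))) := by
  have hweight : ∀ m : ι → ℕ, ∑ j, w j * (m + Pi.single i 1 : ι → ℕ) j
      = (∑ j, w j * m j) + w i := by
    intro m
    simp [mul_add, sum_add_distrib, Pi.single_apply]
  calc (w i : ℂ) * s i * gammaSeries s w (a - w i)
      = w i * (s i * ∑' m, expCoeff s m *
          Gamma (a - ((∑ j, w j * (m + Pi.single i 1 : ι → ℕ) j : ℕ) : ℂ))) := by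
        rw [mul_assoc, gammaSeries]
        congr 2
        refine tsum_congr fun m => ?_
        rw [hweight, Nat.cast_add, sub_sub, add_comm (w i : ℂ)]
    _ = w i * ∑' m, (m i : ℂ) * (expCoeff s m * Gamma (a - ((∑ j, w j * m j : ℕ) : ℂ))) := by
        rw [tsum_natCast_mul_expCoeff_mul]
    _ = _ := by
        rw [← tsum_mul_left]
        refine tsum_congr fun m => ?_
        push_cast
        ring

theorem gammaSeries_add_one_add_sum {a : ℂ} (ha : ∀ N : ℕ, a ≠ N) :
    gammaSeries s w (a + 1) + ∑ i, (w i : ℂ) * s i * gammaSeries s w (a - w i)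
      = a * gammaSeries s w a := by
  classical
  set T : (ι → ℕ) → ℕ := fun m => ∑ i, w i * m i with hT
  set t : (ι → ℕ) → ℂ := fun m => expCoeff s m * Gamma (a - (T m : ℂ))
  have hsummable_shift : Summable fun m => (a - (T m : ℂ)) * t m :=
    (summable_gammaSeries s w (a + 1)).congr (expCoeff_mul_Gamma_add_one_sub s w ha)
  have hsummable_T : Summable fun m => (T m : ℂ) * t m :=
    ((summable_gammaSeries s w a).mul_left a).sub hsummable_shift |>.congr fun m => by ring
  have hpart (i : ι) : Summable fun m => ((w i * m i : ℕ) : ℂ) * t m := by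
    refine Summable.of_norm_bounded hsummable_T.norm fun m => ?_
    rw [norm_mul _ (t m), norm_mul _ (t m), Complex.norm_natCast, Complex.norm_natCast]
    gcongr
    exact single_le_sum (f := fun j => w j * m j) (fun _ _ => Nat.zero_le _) (mem_univ i)
  have hsum : ∑ i, (w i : ℂ) * s i * gammaSeries s w (a - w i) = ∑' m, (T m : ℂ) * t m := by
    simp_rw [natCast_mul_gammaSeries_sub s w a]
    rw [← Summable.tsum_finsetSum fun i _ => hpart i]
    refine tsum_congr fun m => ?_
    rw [← sum_mul, hT, Nat.cast_sum]
  calc gammaSeries s w (a + 1) + ∑ i, (w i : ℂ) * s i * gammaSeries s w (a - w i)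
      = ∑' m, (a - (T m : ℂ)) * t m + ∑' m, (T m : ℂ) * t m := by
        rw [hsum, gammaSeries, tsum_congr (expCoeff_mul_Gamma_add_one_sub s w ha)]
    _ = ∑' m, a * t m := by
        rw [← hsummable_shift.tsum_add hsummable_T]
        exact tsum_congr fun m => by ring
    _ = a * gammaSeries s w a := tsum_mul_left

end GammaSeries

/-- The Kac–Schwarz lowering operator identity for the relative theory:
`Ψ_k + (n+1/2−z)·Ψ_{k−1} + Σ_{i=1}^r i·s_i·Ψ_{k−1−i} = (k−1)·Ψ_{k−1}`, where
`Ψ_j(z) = Σ_m (∏_i s_i^{m_i}/m_i!) Γ(z+j−n−1/2−Σ_i i·m_i)`. -/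
theorem stmt15 (r : ℕ) (s : Fin r → ℂ) (n : ℂ) (k : ℤ) (z : ℂ)
    (hz : ∀ m : ℤ, z - n - 1/2 ≠ (m : ℂ))
    (Ψ : ℤ → ℂ)
    (hΨ : ∀ j : ℤ, Ψ j = ∑' m : Fin r → ℕ,
      (∏ i, s i ^ m i / ((m i).factorial : ℂ)) *
        Complex.Gamma (z + (j : ℂ) - n - 1/2 - ((∑ i, (i.val + 1) * m i : ℕ) : ℂ))) :
    Ψ k + (n + 1/2 - z) * Ψ (k - 1)
      + (∑ i : Fin r, ((i.val + 1 : ℕ) : ℂ) * s i * Ψ (k - 1 - (i.val + 1 : ℤ)))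
      = ((k : ℂ) - 1) * Ψ (k - 1) := by
  set a : ℂ := z + ((k : ℂ) - 1) - n - 1/2
  have ha : ∀ N : ℕ, a ≠ N := fun N h => hz (N - (k - 1)) (by push_cast; linear_combination h)
  have hΨ' (j : ℤ) (b : ℂ) (hb : z + j - n - 1/2 = b) :
      Ψ j = gammaSeries s (fun i => i.val + 1) b :=
    hb ▸ hΨ j
  have hsum : ∑ i : Fin r, ((i.val + 1 : ℕ) : ℂ) * s i * Ψ (k - 1 - (i.val + 1 : ℤ))
      = ∑ i : Fin r, ((i.val + 1 : ℕ) : ℂ) * s i *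
          gammaSeries s (fun i => i.val + 1) (a - ((i.val + 1 : ℕ) : ℂ)) :=
    sum_congr rfl fun i _ => by rw [hΨ' _ (a - ((i.val + 1 : ℕ) : ℂ)) (by push_cast; ring)]
  rw [hΨ' k (a + 1) (by ring), hΨ' (k - 1) a (by push_cast; ring), hsum]
  linear_combination gammaSeries_add_one_add_sum s (fun i : Fin r => i.val + 1) ha
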